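/- arXiv:2507.15992 — 3 statements merged into one kernel-verified Lean document; each statement's English description precedes it below -/
import Mathlib

section
/- Let γ denote the Euler–Mascheroni constant. For every real number x with x > 77416, one has 1 + (x/12)·(1/(e^γ·log(log x) + 3/log(log 6))) − (7·√x)/3 > 34. -/
open Real

section GenusBoundAux

open Filter Finset

private lemma aux_exp (u : ℝ) (hu : 0 ≤ u) : (1 - u) * Real.exp (2*u) ≤ 1 + u := by
  have hder : ∀ y : ℝ, HasDerivAt (fun z : ℝ => (1+z) - (1-z)*Real.exp (2*z))
      (1 - ((-1)*Real.exp (2*y) + (1-y)*(Real.exp (2*y)*2))) y := by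
    intro y
    have h1 : HasDerivAt (fun z : ℝ => 1+z) 1 y := by
      simpa using (hasDerivAt_id y).const_add (1:ℝ)
    have h2 : HasDerivAt (fun z : ℝ => 1-z) (-1) y := by
      simpa using (hasDerivAt_id y).const_sub (1:ℝ)
    have h3 : HasDerivAt (fun z : ℝ => Real.exp (2*z)) (Real.exp (2*y)*2) y := by
      have := (Real.hasDerivAt_exp (2*y)).comp y ((hasDerivAt_id y).const_mul (2:ℝ))
      simpa [Function.comp_def] using this
    exact h1.sub (h2.mul h3)
  have hmono : Monotone (fun z : ℝ => (1+z) - (1-z)*Real.exp (2*z)) := by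
    apply monotone_of_deriv_nonneg
    · intro y; exact (hder y).differentiableAt
    · intro y
      rw [(hder y).deriv]
      have h6 := Real.add_one_le_exp (-(2*y))
      rw [Real.exp_neg] at h6
      have hp := Real.exp_pos (2*y)
      have h7 : (1-2*y)*Real.exp (2*y) ≤ 1 := by
        have h8 := mul_le_mul_of_nonneg_right h6 hp.le
        rw [inv_mul_cancel₀ hp.ne'] at h8
        nlinarith [h8]
      nlinarith [h7]
  have h0 : (1+(0:ℝ)) - (1-(0:ℝ))*Real.exp (2*(0:ℝ)) ≤ (1+u) - (1-u)*Real.exp (2*u) := hmono hu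
  norm_num [Real.exp_zero] at h0
  linarith

private lemma log_step {u : ℝ} (h0 : 0 < u) (h1 : u < 1) :
    2*u ≤ Real.log (1+u) - Real.log (1-u) := by
  have hexp := aux_exp u h0.le
  have hpos : (0:ℝ) < (1-u)*Real.exp (2*u) := mul_pos (by linarith) (Real.exp_pos _)
  have hlog := Real.log_le_log hpos hexp
  rw [Real.log_mul (ne_of_gt (by linarith : (0:ℝ) < 1-u)) (Real.exp_ne_zero _),
    Real.log_exp] at hlog
  linarith

private lemma log_step' (m : ℝ) (hm : 1 ≤ m) :
    1/m ≤ Real.log (2*m+1) - Real.log (2*m-1) := by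
  have h0 : (0:ℝ) < m := lt_of_lt_of_le one_pos hm
  have hu0 : (0:ℝ) < 1/(2*m) := by positivity
  have hu1 : 1/(2*m) < 1 := by rw [div_lt_one (by linarith)]; linarith
  have key := log_step hu0 hu1
  have e1 : 1 + 1/(2*m) = (2*m+1)/(2*m) := by field_simp
  have e2 : 1 - 1/(2*m) = (2*m-1)/(2*m) := by field_simp
  rw [e1, e2, Real.log_div (by positivity) (by positivity),
    Real.log_div (ne_of_gt (by linarith : (0:ℝ) < 2*m-1)) (by positivity)] at key
  have e3 : 2*(1/(2*m)) = 1/m := by field_simp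
  linarith [key, e3.symm.le, e3.le]

private lemma harmonic_128_eq : (harmonic 128 : ℚ) = 72552921080947538317446905633815133414572988188576608701/13353756090997411579403749204440236542538872688049072000 := by
  have h0 : (harmonic 0 : ℚ) = 0 := harmonic_zero
  have h1 : (harmonic 1 : ℚ) = 1/1 := by rw [show (1:ℕ) = 0 + 1 from rfl, harmonic_succ, h0]; norm_num
  have h2 : (harmonic 2 : ℚ) = 3/2 := by rw [show (2:ℕ) = 1 + 1 from rfl, harmonic_succ, h1]; norm_num
  have h3 : (harmonic 3 : ℚ) = 11/6 := by rw [show (3:ℕ) = 2 + 1 from rfl, harmonic_succ, h2]; norm_num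
  have h4 : (harmonic 4 : ℚ) = 25/12 := by rw [show (4:ℕ) = 3 + 1 from rfl, harmonic_succ, h3]; norm_num
  have h5 : (harmonic 5 : ℚ) = 137/60 := by rw [show (5:ℕ) = 4 + 1 from rfl, harmonic_succ, h4]; norm_num
  have h6 : (harmonic 6 : ℚ) = 49/20 := by rw [show (6:ℕ) = 5 + 1 from rfl, harmonic_succ, h5]; norm_num
  have h7 : (harmonic 7 : ℚ) = 363/140 := by rw [show (7:ℕ) = 6 + 1 from rfl, harmonic_succ, h6]; norm_num
  have h8 : (harmonic 8 : ℚ) = 761/280 := by rw [show (8:ℕ) = 7 + 1 from rfl, harmonic_succ, h7]; norm_num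
  have h9 : (harmonic 9 : ℚ) = 7129/2520 := by rw [show (9:ℕ) = 8 + 1 from rfl, harmonic_succ, h8]; norm_num
  have h10 : (harmonic 10 : ℚ) = 7381/2520 := by rw [show (10:ℕ) = 9 + 1 from rfl, harmonic_succ, h9]; norm_num
  have h11 : (harmonic 11 : ℚ) = 83711/27720 := by rw [show (11:ℕ) = 10 + 1 from rfl, harmonic_succ, h10]; norm_num
  have h12 : (harmonic 12 : ℚ) = 86021/27720 := by rw [show (12:ℕ) = 11 + 1 from rfl, harmonic_succ, h11]; norm_num
  have h13 : (harmonic 13 : ℚ) = 1145993/360360 := by rw [show (13:ℕ) = 12 + 1 from rfl, harmonic_succ, h12]; norm_num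
  have h14 : (harmonic 14 : ℚ) = 1171733/360360 := by rw [show (14:ℕ) = 13 + 1 from rfl, harmonic_succ, h13]; norm_num
  have h15 : (harmonic 15 : ℚ) = 1195757/360360 := by rw [show (15:ℕ) = 14 + 1 from rfl, harmonic_succ, h14]; norm_num
  have h16 : (harmonic 16 : ℚ) = 2436559/720720 := by rw [show (16:ℕ) = 15 + 1 from rfl, harmonic_succ, h15]; norm_num
  have h17 : (harmonic 17 : ℚ) = 42142223/12252240 := by rw [show (17:ℕ) = 16 + 1 from rfl, harmonic_succ, h16]; norm_num
  have h18 : (harmonic 18 : ℚ) = 14274301/4084080 := by rw [show (18:ℕ) = 17 + 1 from rfl, harmonic_succ, h17]; norm_num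
  have h19 : (harmonic 19 : ℚ) = 275295799/77597520 := by rw [show (19:ℕ) = 18 + 1 from rfl, harmonic_succ, h18]; norm_num
  have h20 : (harmonic 20 : ℚ) = 55835135/15519504 := by rw [show (20:ℕ) = 19 + 1 from rfl, harmonic_succ, h19]; norm_num
  have h21 : (harmonic 21 : ℚ) = 18858053/5173168 := by rw [show (21:ℕ) = 20 + 1 from rfl, harmonic_succ, h20]; norm_num
  have h22 : (harmonic 22 : ℚ) = 19093197/5173168 := by rw [show (22:ℕ) = 21 + 1 from rfl, harmonic_succ, h21]; norm_num
  have h23 : (harmonic 23 : ℚ) = 444316699/118982864 := by rw [show (23:ℕ) = 22 + 1 from rfl, harmonic_succ, h22]; norm_num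
  have h24 : (harmonic 24 : ℚ) = 1347822955/356948592 := by rw [show (24:ℕ) = 23 + 1 from rfl, harmonic_succ, h23]; norm_num
  have h25 : (harmonic 25 : ℚ) = 34052522467/8923714800 := by rw [show (25:ℕ) = 24 + 1 from rfl, harmonic_succ, h24]; norm_num
  have h26 : (harmonic 26 : ℚ) = 34395742267/8923714800 := by rw [show (26:ℕ) = 25 + 1 from rfl, harmonic_succ, h25]; norm_num
  have h27 : (harmonic 27 : ℚ) = 312536252003/80313433200 := by rw [show (27:ℕ) = 26 + 1 from rfl, harmonic_succ, h26]; norm_num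
  have h28 : (harmonic 28 : ℚ) = 315404588903/80313433200 := by rw [show (28:ℕ) = 27 + 1 from rfl, harmonic_succ, h27]; norm_num
  have h29 : (harmonic 29 : ℚ) = 9227046511387/2329089562800 := by rw [show (29:ℕ) = 28 + 1 from rfl, harmonic_succ, h28]; norm_num
  have h30 : (harmonic 30 : ℚ) = 9304682830147/2329089562800 := by rw [show (30:ℕ) = 29 + 1 from rfl, harmonic_succ, h29]; norm_num
  have h31 : (harmonic 31 : ℚ) = 290774257297357/72201776446800 := by rw [show (31:ℕ) = 30 + 1 from rfl, harmonic_succ, h30]; norm_num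
  have h32 : (harmonic 32 : ℚ) = 586061125622639/144403552893600 := by rw [show (32:ℕ) = 31 + 1 from rfl, harmonic_succ, h31]; norm_num
  have h33 : (harmonic 33 : ℚ) = 53676090078349/13127595717600 := by rw [show (33:ℕ) = 32 + 1 from rfl, harmonic_succ, h32]; norm_num
  have h34 : (harmonic 34 : ℚ) = 54062195834749/13127595717600 := by rw [show (34:ℕ) = 33 + 1 from rfl, harmonic_succ, h33]; norm_num
  have h35 : (harmonic 35 : ℚ) = 54437269998109/13127595717600 := by rw [show (35:ℕ) = 34 + 1 from rfl, harmonic_succ, h34]; norm_num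
  have h36 : (harmonic 36 : ℚ) = 54801925434709/13127595717600 := by rw [show (36:ℕ) = 35 + 1 from rfl, harmonic_succ, h35]; norm_num
  have h37 : (harmonic 37 : ℚ) = 2040798836801833/485721041551200 := by rw [show (37:ℕ) = 36 + 1 from rfl, harmonic_succ, h36]; norm_num
  have h38 : (harmonic 38 : ℚ) = 2053580969474233/485721041551200 := by rw [show (38:ℕ) = 37 + 1 from rfl, harmonic_succ, h37]; norm_num
  have h39 : (harmonic 39 : ℚ) = 2066035355155033/485721041551200 := by rw [show (39:ℕ) = 38 + 1 from rfl, harmonic_succ, h38]; norm_num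
  have h40 : (harmonic 40 : ℚ) = 2078178381193813/485721041551200 := by rw [show (40:ℕ) = 39 + 1 from rfl, harmonic_succ, h39]; norm_num
  have h41 : (harmonic 41 : ℚ) = 85691034670497533/19914562703599200 := by rw [show (41:ℕ) = 40 + 1 from rfl, harmonic_succ, h40]; norm_num
  have h42 : (harmonic 42 : ℚ) = 12309312989335019/2844937529085600 := by rw [show (42:ℕ) = 41 + 1 from rfl, harmonic_succ, h41]; norm_num
  have h43 : (harmonic 43 : ℚ) = 532145396070491417/122332313750680800 := by rw [show (43:ℕ) = 42 + 1 from rfl, harmonic_succ, h42]; norm_num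
  have h44 : (harmonic 44 : ℚ) = 5884182435213075787/1345655451257488800 := by rw [show (44:ℕ) = 43 + 1 from rfl, harmonic_succ, h43]; norm_num
  have h45 : (harmonic 45 : ℚ) = 5914085889685464427/1345655451257488800 := by rw [show (45:ℕ) = 44 + 1 from rfl, harmonic_succ, h44]; norm_num
  have h46 : (harmonic 46 : ℚ) = 5943339269060627227/1345655451257488800 := by rw [show (46:ℕ) = 45 + 1 from rfl, harmonic_succ, h45]; norm_num
  have h47 : (harmonic 47 : ℚ) = 280682601097106968469/63245806209101973600 := by rw [show (47:ℕ) = 46 + 1 from rfl, harmonic_succ, h46]; norm_num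
  have h48 : (harmonic 48 : ℚ) = 282000222059796592919/63245806209101973600 := by rw [show (48:ℕ) = 47 + 1 from rfl, harmonic_succ, h47]; norm_num
  have h49 : (harmonic 49 : ℚ) = 13881256687139135026631/3099044504245996706400 := by rw [show (49:ℕ) = 48 + 1 from rfl, harmonic_succ, h48]; norm_num
  have h50 : (harmonic 50 : ℚ) = 13943237577224054960759/3099044504245996706400 := by rw [show (50:ℕ) = 49 + 1 from rfl, harmonic_succ, h49]; norm_num
  have h51 : (harmonic 51 : ℚ) = 14004003155738682347159/3099044504245996706400 := by rw [show (51:ℕ) = 50 + 1 from rfl, harmonic_succ, h50]; norm_num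
  have h52 : (harmonic 52 : ℚ) = 14063600165435720745359/3099044504245996706400 := by rw [show (52:ℕ) = 51 + 1 from rfl, harmonic_succ, h51]; norm_num
  have h53 : (harmonic 53 : ℚ) = 748469853272339196210427/164249358725037825439200 := by rw [show (53:ℕ) = 52 + 1 from rfl, harmonic_succ, h52]; norm_num
  have h54 : (harmonic 54 : ℚ) = 250503836021181200128409/54749786241679275146400 := by rw [show (54:ℕ) = 53 + 1 from rfl, harmonic_succ, h53]; norm_num
  have h55 : (harmonic 55 : ℚ) = 251499286680120823312889/54749786241679275146400 := by rw [show (55:ℕ) = 54 + 1 from rfl, harmonic_succ, h54]; norm_num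
  have h56 : (harmonic 56 : ℚ) = 252476961434436524654789/54749786241679275146400 := by rw [show (56:ℕ) = 55 + 1 from rfl, harmonic_succ, h55]; norm_num
  have h57 : (harmonic 57 : ℚ) = 253437484000080020709989/54749786241679275146400 := by rw [show (57:ℕ) = 56 + 1 from rfl, harmonic_succ, h56]; norm_num
  have h58 : (harmonic 58 : ℚ) = 254381445831833111660789/54749786241679275146400 := by rw [show (58:ℕ) = 57 + 1 from rfl, harmonic_succ, h57]; norm_num
  have h59 : (harmonic 59 : ℚ) = 15063255090319832863132951/3230237388259077233637600 := by rw [show (59:ℕ) = 58 + 1 from rfl, harmonic_succ, h58]; norm_num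
  have h60 : (harmonic 60 : ℚ) = 15117092380124150817026911/3230237388259077233637600 := by rw [show (60:ℕ) = 59 + 1 from rfl, harmonic_succ, h59]; norm_num
  have h61 : (harmonic 61 : ℚ) = 925372872575832277072279171/197044480683803711251893600 := by rw [show (61:ℕ) = 60 + 1 from rfl, harmonic_succ, h60]; norm_num
  have h62 : (harmonic 62 : ℚ) = 928551009361054917576341971/197044480683803711251893600 := by rw [show (62:ℕ) = 61 + 1 from rfl, harmonic_succ, h61]; norm_num
  have h63 : (harmonic 63 : ℚ) = 310559566510213034489743057/65681493561267903750631200 := by rw [show (63:ℕ) = 62 + 1 from rfl, harmonic_succ, h62]; norm_num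
  have h64 : (harmonic 64 : ℚ) = 623171679694215690971693339/131362987122535807501262400 := by rw [show (64:ℕ) = 63 + 1 from rfl, harmonic_succ, h63]; norm_num
  have h65 : (harmonic 65 : ℚ) = 625192648726870088010174299/131362987122535807501262400 := by rw [show (65:ℕ) = 64 + 1 from rfl, harmonic_succ, h64]; norm_num
  have h66 : (harmonic 66 : ℚ) = 209060999005535159677640233/43787662374178602500420800 := by rw [show (66:ℕ) = 65 + 1 from rfl, harmonic_succ, h65]; norm_num
  have h67 : (harmonic 67 : ℚ) = 14050874595745034300902316411/2933773379069966367528193600 := by rw [show (67:ℕ) = 66 + 1 from rfl, harmonic_succ, h66]; norm_num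
  have h68 : (harmonic 68 : ℚ) = 14094018321907827923954201611/2933773379069966367528193600 := by rw [show (68:ℕ) = 67 + 1 from rfl, harmonic_succ, h67]; norm_num
  have h69 : (harmonic 69 : ℚ) = 42409610330030873613929048033/8801320137209899102584580800 := by rw [show (69:ℕ) = 68 + 1 from rfl, harmonic_succ, h68]; norm_num
  have h70 : (harmonic 70 : ℚ) = 42535343474848157886823113473/8801320137209899102584580800 := by rw [show (70:ℕ) = 69 + 1 from rfl, harmonic_succ, h69]; norm_num
  have h71 : (harmonic 71 : ℚ) = 3028810706851429109067025637383/624893729741902836283505236800 := by rw [show (71:ℕ) = 70 + 1 from rfl, harmonic_succ, h70]; norm_num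
  have h72 : (harmonic 72 : ℚ) = 9112469359293533278712889630349/1874681189225708508850515710400 := by rw [show (72:ℕ) = 71 + 1 from rfl, harmonic_succ, h71]; norm_num
  have h73 : (harmonic 73 : ℚ) = 667084944417653637854891458725877/136851726813476721146087646859200 := by rw [show (73:ℕ) = 72 + 1 from rfl, harmonic_succ, h72]; norm_num
  have h74 : (harmonic 74 : ℚ) = 668934292077295215167676426926677/136851726813476721146087646859200 := by rw [show (74:ℕ) = 73 + 1 from rfl, harmonic_succ, h73]; norm_num
  have h75 : (harmonic 75 : ℚ) = 670758981768141571449624262218133/136851726813476721146087646859200 := by rw [show (75:ℕ) = 74 + 1 from rfl, harmonic_succ, h74]; norm_num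
  have h76 : (harmonic 76 : ℚ) = 672559662384108370412072783887333/136851726813476721146087646859200 := by rw [show (76:ℕ) = 75 + 1 from rfl, harmonic_succ, h75]; norm_num
  have h77 : (harmonic 77 : ℚ) = 61303359776139104182852056677903/12441066073952429195098876987200 := by rw [show (77:ℕ) = 76 + 1 from rfl, harmonic_succ, h76]; norm_num
  have h78 : (harmonic 78 : ℚ) = 61462860623241058403302042280303/12441066073952429195098876987200 := by rw [show (78:ℕ) = 77 + 1 from rfl, harmonic_succ, h77]; norm_num
  have h79 : (harmonic 79 : ℚ) = 4868007055309996043055960217131137/982844219842241906412811281988800 := by rw [show (79:ℕ) = 78 + 1 from rfl, harmonic_succ, h78]; norm_num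
  have h80 : (harmonic 80 : ℚ) = 4880292608058024066886120358155997/982844219842241906412811281988800 := by rw [show (80:ℕ) = 79 + 1 from rfl, harmonic_succ, h79]; norm_num
  have h81 : (harmonic 81 : ℚ) = 44031838385838021258243173365847173/8845597978580177157715301537899200 := by rw [show (81:ℕ) = 80 + 1 from rfl, harmonic_succ, h80]; norm_num
  have h82 : (harmonic 82 : ℚ) = 44139711531918267321142140457772773/8845597978580177157715301537899200 := by rw [show (82:ℕ) = 81 + 1 from rfl, harmonic_succ, h81]; norm_num
  have h83 : (harmonic 83 : ℚ) = 3672441655127796364812512959533039359/734184632222154704090370027645633600 := by rw [show (83:ℕ) = 82 + 1 from rfl, harmonic_succ, h82]; norm_num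
  have h84 : (harmonic 84 : ℚ) = 3681181948368536301765969745576439759/734184632222154704090370027645633600 := by rw [show (84:ℕ) = 83 + 1 from rfl, harmonic_succ, h83]; norm_num
  have h85 : (harmonic 85 : ℚ) = 3689819414629973415931738804725211919/734184632222154704090370027645633600 := by rw [show (85:ℕ) = 84 + 1 from rfl, harmonic_succ, h84]; norm_num
  have h86 : (harmonic 86 : ℚ) = 3698356445237207772956045432953649519/734184632222154704090370027645633600 := by rw [show (86:ℕ) = 85 + 1 from rfl, harmonic_succ, h85]; norm_num
  have h87 : (harmonic 87 : ℚ) = 3706795349055853229324900260857622319/734184632222154704090370027645633600 := by rw [show (87:ℕ) = 86 + 1 from rfl, harmonic_succ, h86]; norm_num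
  have h88 : (harmonic 88 : ℚ) = 40866521918642154860585199122889549709/8076030954443701744994070304101969600 := by rw [show (88:ℕ) = 87 + 1 from rfl, harmonic_succ, h87]; norm_num
  have h89 : (harmonic 89 : ℚ) = 3645196481713595484337076792241271893701/718766754945489455304472257065075294400 := by rw [show (89:ℕ) = 88 + 1 from rfl, harmonic_succ, h88]; norm_num
  have h90 : (harmonic 90 : ℚ) = 3653182778990767589396015372875328285861/718766754945489455304472257065075294400 := by rw [show (90:ℕ) = 89 + 1 from rfl, harmonic_succ, h89]; norm_num
  have h91 : (harmonic 91 : ℚ) = 3661081314759399341652108474601318124261/718766754945489455304472257065075294400 := by rw [show (91:ℕ) = 90 + 1 from rfl, harmonic_succ, h90]; norm_num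
  have h92 : (harmonic 92 : ℚ) = 3668893996878372053122809260004199377461/718766754945489455304472257065075294400 := by rw [show (92:ℕ) = 91 + 1 from rfl, harmonic_succ, h91]; norm_num
  have h93 : (harmonic 93 : ℚ) = 3676622671662732154792749821908124918261/718766754945489455304472257065075294400 := by rw [show (93:ℕ) = 92 + 1 from rfl, harmonic_succ, h92]; norm_num
  have h94 : (harmonic 94 : ℚ) = 3684269126502577787295988888472646995861/718766754945489455304472257065075294400 := by rw [show (94:ℕ) = 93 + 1 from rfl, harmonic_succ, h93]; norm_num
  have h95 : (harmonic 95 : ℚ) = 3691835092344109255246562280652279367381/718766754945489455304472257065075294400 := by rw [show (95:ℕ) = 94 + 1 from rfl, harmonic_succ, h94]; norm_num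
  have h96 : (harmonic 96 : ℚ) = 3699322246041458103739317199996707235031/718766754945489455304472257065075294400 := by rw [show (96:ℕ) = 95 + 1 from rfl, harmonic_succ, h95]; norm_num
  have h97 : (harmonic 97 : ℚ) = 359553024620966925518018240656745677092407/69720375229712477164533808935312303556800 := by rw [show (97:ℕ) = 96 + 1 from rfl, harmonic_succ, h96]; norm_num
  have h98 : (harmonic 98 : ℚ) = 360264457021270114060513483605065190394007/69720375229712477164533808935312303556800 := by rw [show (98:ℕ) = 97 + 1 from rfl, harmonic_succ, h97]; norm_num
  have h99 : (harmonic 99 : ℚ) = 360968703235711654233892612988250163157207/69720375229712477164533808935312303556800 := by rw [show (99:ℕ) = 98 + 1 from rfl, harmonic_succ, h98]; norm_num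
  have h100 : (harmonic 100 : ℚ) = 14466636279520351160221518043104131447711/2788815009188499086581352357412492142272 := by rw [show (100:ℕ) = 99 + 1 from rfl, harmonic_succ, h99]; norm_num
  have h101 : (harmonic 101 : ℚ) = 1463919079240743966268954674710929768361083/281670315928038407744716588098661706369472 := by rw [show (101:ℕ) = 100 + 1 from rfl, harmonic_succ, h100]; norm_num
  have h102 : (harmonic 102 : ℚ) = 1466680552926312970266451896162877432149019/281670315928038407744716588098661706369472 := by rw [show (102:ℕ) = 101 + 1 from rfl, harmonic_succ, h101]; norm_num
  have h103 : (harmonic 103 : ℚ) = 151349767267338274345189261892875037217718429/29012042540587955997705808574162155756055616 := by rw [show (103:ℕ) = 102 + 1 from rfl, harmonic_succ, h102]; norm_num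
  have h104 : (harmonic 104 : ℚ) = 151628729214843927768244125436857365638449733/29012042540587955997705808574162155756055616 := by rw [show (104:ℕ) = 103 + 1 from rfl, harmonic_succ, h103]; norm_num
  have h105 : (harmonic 105 : ℚ) = 759525171909485731983968522830675502275870361/145060212702939779988529042870810778780278080 := by rw [show (105:ℕ) = 104 + 1 from rfl, harmonic_succ, h104]; norm_num
  have h106 : (harmonic 106 : ℚ) = 760893664482154975191407476065305792641722041/145060212702939779988529042870810778780278080 := by rw [show (106:ℕ) = 105 + 1 from rfl, harmonic_succ, h105]; norm_num
  have h107 : (harmonic 107 : ℚ) = 81560682312293522125469128981858530591444536467/15521442759214556458772607587176753329489754560 := by rw [show (107:ℕ) = 106 + 1 from rfl, harmonic_succ, h106]; norm_num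
  have h108 : (harmonic 108 : ℚ) = 81704399374878842092679986459517574603754626787/15521442759214556458772607587176753329489754560 := by rw [show (108:ℕ) = 107 + 1 from rfl, harmonic_succ, h107]; norm_num
  have h109 : (harmonic 109 : ℚ) = 8921300974621008344560891131674592385138744074343/1691837260754386654006214227002266112914383247040 := by rw [show (109:ℕ) = 108 + 1 from rfl, harmonic_succ, h108]; norm_num
  have h110 : (harmonic 110 : ℚ) = 812425573941376284756780362571245808659649778037/153803387341307877636928566091115101174034840640 := by rw [show (110:ℕ) = 109 + 1 from rfl, harmonic_succ, h109]; norm_num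
  have h111 : (harmonic 111 : ℚ) = 813811190043550229600356295599093692454010452277/153803387341307877636928566091115101174034840640 := by rw [show (111:ℕ) = 110 + 1 from rfl, harmonic_succ, h110]; norm_num
  have h112 : (harmonic 112 : ℚ) = 815184434573383335650686014939192934428778620497/153803387341307877636928566091115101174034840640 := by rw [show (112:ℕ) = 111 + 1 from rfl, harmonic_succ, h111]; norm_num
  have h113 : (harmonic 113 : ℚ) = 92269644494133624806164448254219916691626018956801/17379782769567790172972927968296006432665936992320 := by rw [show (113:ℕ) = 112 + 1 from rfl, harmonic_succ, h112]; norm_num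
  have h114 : (harmonic 114 : ℚ) = 92422098728954394895401052885520758853316071035681/17379782769567790172972927968296006432665936992320 := by rw [show (114:ℕ) = 113 + 1 from rfl, harmonic_succ, h113]; norm_num
  have h115 : (harmonic 115 : ℚ) = 92573227274776723505600817476549419778817513966049/17379782769567790172972927968296006432665936992320 := by rw [show (115:ℕ) = 114 + 1 from rfl, harmonic_succ, h114]; norm_num
  have h116 : (harmonic 116 : ℚ) = 92723052988307480317436790993517488799788772043569/17379782769567790172972927968296006432665936992320 := by rw [show (116:ℕ) = 115 + 1 from rfl, harmonic_succ, h115]; norm_num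
  have h117 : (harmonic 117 : ℚ) = 92871598140184128096692969865041386290666258684529/17379782769567790172972927968296006432665936992320 := by rw [show (117:ℕ) = 116 + 1 from rfl, harmonic_succ, h116]; norm_num
  have h118 : (harmonic 118 : ℚ) = 93018884434841482250701215017315081260434614082769/17379782769567790172972927968296006432665936992320 := by rw [show (118:ℕ) = 117 + 1 from rfl, harmonic_succ, h117]; norm_num
  have h119 : (harmonic 119 : ℚ) = 93164933029543732588289222815367988877515840444049/17379782769567790172972927968296006432665936992320 := by rw [show (119:ℕ) = 118 + 1 from rfl, harmonic_succ, h118]; norm_num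
  have h120 : (harmonic 120 : ℚ) = 18661952910524692834612799443020757786224277983797/3475956553913558034594585593659201286533187398464 := by rw [show (120:ℕ) = 119 + 1 from rfl, harmonic_succ, h119]; norm_num
  have h121 : (harmonic 121 : ℚ) = 2261572258727401391022743318199170893419670823437901/420590743023540522185944856832763355670515675214144 := by rw [show (121:ℕ) = 120 + 1 from rfl, harmonic_succ, h120]; norm_num
  have h122 : (harmonic 122 : ℚ) = 2265019723834151723171808439976488625843199640447853/420590743023540522185944856832763355670515675214144 := by rw [show (122:ℕ) = 121 + 1 from rfl, harmonic_succ, h121]; norm_num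
  have h123 : (harmonic 123 : ℚ) = 2268439160769302459124539698975128978328325784148781/420590743023540522185944856832763355670515675214144 := by rw [show (123:ℕ) = 122 + 1 from rfl, harmonic_succ, h122]; norm_num
  have h124 : (harmonic 124 : ℚ) = 2271831021600137463335716673627006102164378329916637/420590743023540522185944856832763355670515675214144 := by rw [show (124:ℕ) = 123 + 1 from rfl, harmonic_succ, h123]; norm_num
  have h125 : (harmonic 125 : ℚ) = 284399468443040723439150529060208526126217806914793769/52573842877942565273243107104095419458814459401768000 := by rw [show (125:ℕ) = 124 + 1 from rfl, harmonic_succ, h124]; norm_num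
  have h126 : (harmonic 126 : ℚ) = 284816721164294235861954045783256902471129032783061769/52573842877942565273243107104095419458814459401768000 := by rw [show (126:ℕ) = 125 + 1 from rfl, harmonic_succ, h125]; norm_num
  have h127 : (harmonic 127 : ℚ) = 36224297430743310519741406921577722033292201622850612663/6676878045498705789701874602220118271269436344024536000 := by rw [show (127:ℕ) = 126 + 1 from rfl, harmonic_succ, h126]; norm_num
  have h128 : (harmonic 128 : ℚ) = 72552921080947538317446905633815133414572988188576608701/13353756090997411579403749204440236542538872688049072000 := by rw [show (128:ℕ) = 127 + 1 from rfl, harmonic_succ, h127]; norm_num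
  exact h128

private lemma harm_chain (n : ℕ) (hn : 128 ≤ n) :
    (harmonic n : ℝ) ≤ (harmonic 128 : ℝ) + (Real.log (2*(n:ℝ)+1) - Real.log 257) := by
  induction n, hn using Nat.le_induction with
  | base => norm_num
  | succ n hn ih =>
    have hn0 : (0:ℝ) ≤ (n:ℝ) := Nat.cast_nonneg n
    have hstep := log_step' ((n:ℝ)+1) (by linarith)
    rw [show 2*((n:ℝ)+1)-1 = 2*(n:ℝ)+1 from by ring] at hstep
    have hh : (harmonic (n+1) : ℝ) = (harmonic n:ℝ) + 1/((n:ℝ)+1) := by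
      push_cast [harmonic_succ]
      ring
    rw [hh]
    push_cast
    push_cast at ih
    linarith [hstep, ih]

private lemma gamma_le :
    Real.eulerMascheroniConstant ≤ (harmonic 128 : ℝ) - Real.log 257 + Real.log 2 := by
  have h2 : Filter.Tendsto (fun n : ℕ => 2 + 1/(n:ℝ)) atTop (nhds 2) := by
    simpa using (tendsto_const_nhds (x := (2:ℝ))).add tendsto_one_div_atTop_nhds_zero_nat
  have h3 : Filter.Tendsto
      (fun n : ℕ => (harmonic 128:ℝ) - Real.log 257 + Real.log (2 + 1/(n:ℝ))) atTop
      (nhds ((harmonic 128:ℝ) - Real.log 257 + Real.log 2)) := by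
    apply Filter.Tendsto.add tendsto_const_nhds
    exact (Real.continuousAt_log (by norm_num)).tendsto.comp h2
  refine le_of_tendsto_of_tendsto Real.tendsto_eulerMascheroniSeq' h3 ?_
  filter_upwards [Filter.eventually_ge_atTop 128] with n hn
  have hn0 : (0:ℝ) < (n:ℝ) := by
    have : 0 < n := by omega
    exact_mod_cast this
  have hseq : Real.eulerMascheroniSeq' n = (harmonic n:ℝ) - Real.log n := by
    rw [Real.eulerMascheroniSeq', if_neg (by omega)]
  have hc := harm_chain n hn
  have e : (2 + 1/(n:ℝ)) = (2*(n:ℝ)+1)/n := by field_simp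
  have hlog : Real.log (2 + 1/(n:ℝ)) = Real.log (2*(n:ℝ)+1) - Real.log n := by
    rw [e, Real.log_div (by positivity) (ne_of_gt hn0)]
  show Real.eulerMascheroniSeq' n ≤ _
  rw [hseq, hlog]
  linarith

private lemma expA : Real.exp Real.eulerMascheroniConstant ≤ 1.7810775 := by
  have hH : (harmonic 128 : ℝ) = 72552921080947538317446905633815133414572988188576608701/13353756090997411579403749204440236542538872688049072000 := by
    rw [harmonic_128_eq]; push_cast; norm_num
  have hg := gamma_le
  rw [hH] at hg
  have h1 : Real.exp Real.eulerMascheroniConstant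
      ≤ Real.exp ((72552921080947538317446905633815133414572988188576608701:ℝ)/13353756090997411579403749204440236542538872688049072000 - Real.log 257 + Real.log 2) := Real.exp_le_exp.mpr hg
  rw [Real.exp_add, Real.exp_sub, Real.exp_log (by norm_num : (0:ℝ) < 257),
    Real.exp_log (by norm_num : (0:ℝ) < 2)] at h1
  have h2 : Real.exp ((72552921080947538317446905633815133414572988188576608701:ℝ)/13353756090997411579403749204440236542538872688049072000) = Real.exp 5 * Real.exp ((72552921080947538317446905633815133414572988188576608701:ℝ)/13353756090997411579403749204440236542538872688049072000 - 5) := by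
    rw [← Real.exp_add]
    congr 1
    ring
  have h4 : Real.exp (5:ℝ) ≤ 2.7182818286^5 := by
    have he : Real.exp (5:ℝ) = Real.exp 1 ^ 5 := by
      rw [← Real.exp_nat_mul]; norm_num
    rw [he]
    exact pow_le_pow_left₀ (Real.exp_pos 1).le Real.exp_one_lt_d9.le 5
  have h3 := Real.exp_bound' (show (0:ℝ) ≤ (72552921080947538317446905633815133414572988188576608701:ℝ)/13353756090997411579403749204440236542538872688049072000 - 5 by norm_num)
    (show (72552921080947538317446905633815133414572988188576608701:ℝ)/13353756090997411579403749204440236542538872688049072000 - 5 ≤ 1 by norm_num) (show 0 < 12 by norm_num)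
  replace h3 : Real.exp ((72552921080947538317446905633815133414572988188576608701:ℝ)/13353756090997411579403749204440236542538872688049072000 - 5) ≤ 1.5421031 :=
    h3.trans (by norm_num [Finset.sum_range_succ, Nat.factorial])
  have h5 : Real.exp ((72552921080947538317446905633815133414572988188576608701:ℝ)/13353756090997411579403749204440236542538872688049072000) ≤ 2.7182818286^5 * 1.5421031 := by
    rw [h2]
    exact mul_le_mul h4 h3 (Real.exp_pos _).le (by norm_num)
  have h6 : (2.7182818286:ℝ)^5 * 1.5421031 / 257 * 2 ≤ 1.7810775 := by norm_num
  calc Real.exp Real.eulerMascheroniConstant ≤ Real.exp ((72552921080947538317446905633815133414572988188576608701:ℝ)/13353756090997411579403749204440236542538872688049072000) / 257 * 2 := h1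
    _ ≤ 2.7182818286^5 * 1.5421031 / 257 * 2 := by linarith
    _ ≤ 1.7810775 := h6

private lemma log_six_lb : (1.7917594:ℝ) ≤ Real.log 6 := by
  rw [Real.le_log_iff_exp_le (by norm_num : (0:ℝ) < 6)]
  have h2 := Real.exp_bound' (show (0:ℝ) ≤ 0.7917594 by norm_num)
    (show (0.7917594:ℝ) ≤ 1 by norm_num) (show 0 < 12 by norm_num)
  replace h2 : Real.exp (0.7917594:ℝ) ≤ 2.2072766 :=
    h2.trans (by norm_num [Finset.sum_range_succ, Nat.factorial])
  have he : Real.exp (1.7917594:ℝ) = Real.exp 1 * Real.exp (0.7917594:ℝ) := by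
    rw [← Real.exp_add]; norm_num
  rw [he]
  calc Real.exp 1 * Real.exp (0.7917594:ℝ) ≤ 2.7182818286 * 2.2072766 :=
        mul_le_mul Real.exp_one_lt_d9.le h2 (Real.exp_pos _).le (by norm_num)
    _ ≤ 6 := by norm_num

private lemma llsix : (0.5831980:ℝ) ≤ Real.log (Real.log 6) := by
  have h1 := log_six_lb
  rw [Real.le_log_iff_exp_le (by linarith : (0:ℝ) < Real.log 6)]
  have h2 := Real.exp_bound' (show (0:ℝ) ≤ 0.5831980 by norm_num)
    (show (0.5831980:ℝ) ≤ 1 by norm_num) (show 0 < 12 by norm_num)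
  replace h2 : Real.exp (0.5831980:ℝ) ≤ 1.7917594 :=
    h2.trans (by norm_num [Finset.sum_range_succ, Nat.factorial])
  linarith

private lemma b_ub : 3 / Real.log (Real.log 6) ≤ 5.1440510 := by
  have h := llsix
  rw [div_le_iff₀ (by linarith)]
  linarith

private lemma loglog_pos {x : ℝ} (hx : 77416 < x) : 0 < Real.log (Real.log x) := by
  have h1 : (1:ℝ) < Real.log x := by
    rw [Real.lt_log_iff_exp_lt (by linarith : (0:ℝ) < x)]
    exact Real.exp_one_lt_d9.trans (by linarith)
  exact Real.log_pos h1

private lemma loglog_bound {x E M : ℝ} (hx1 : 1 < x) (h1 : x ≤ Real.exp E)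
    (h2 : E ≤ Real.exp M) : Real.log (Real.log x) ≤ M := by
  have hlx : Real.log x ≤ E := (Real.log_le_iff_le_exp (by linarith)).mpr h1
  have h0 : 0 < Real.log x := Real.log_pos hx1
  exact (Real.log_le_iff_le_exp h0).mpr (hlx.trans h2)

private lemma exp_lb_E1 : (77500:ℝ) ≤ Real.exp 11.2580335 := by
  have h := Real.sum_le_exp_of_nonneg (show (0:ℝ) ≤ 11.2580335 by norm_num) 33
  refine le_trans ?_ h
  norm_num [Finset.sum_range_succ, Nat.factorial]

private lemma exp_lb_E2 : (78500:ℝ) ≤ Real.exp 11.2708542 := by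
  have h := Real.sum_le_exp_of_nonneg (show (0:ℝ) ≤ 11.2708542 by norm_num) 33
  refine le_trans ?_ h
  norm_num [Finset.sum_range_succ, Nat.factorial]

private lemma exp_lb_E3 : (110000:ℝ) ≤ Real.exp 11.6082359 := by
  have h := Real.sum_le_exp_of_nonneg (show (0:ℝ) ≤ 11.6082359 by norm_num) 33
  refine le_trans ?_ h
  norm_num [Finset.sum_range_succ, Nat.factorial]

private lemma exp_lb_E4 : (100000000:ℝ) ≤ Real.exp 18.420681 := by
  have h := Real.sum_le_exp_of_nonneg (show (0:ℝ) ≤ 18.420681 by norm_num) 45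
  refine le_trans ?_ h
  norm_num [Finset.sum_range_succ, Nat.factorial]

private lemma exp_lb_E5 : (1800814096:ℝ) ≤ Real.exp 21.3115049 := by
  have h := Real.sum_le_exp_of_nonneg (show (0:ℝ) ≤ 21.3115049 by norm_num) 49
  refine le_trans ?_ h
  norm_num [Finset.sum_range_succ, Nat.factorial]

private lemma exp_lb_M1 : (11.2580335:ℝ) ≤ Real.exp 2.4210822 := by
  have h := Real.sum_le_exp_of_nonneg (show (0:ℝ) ≤ 2.4210822 by norm_num) 15
  refine le_trans ?_ h
  norm_num [Finset.sum_range_succ, Nat.factorial]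

private lemma exp_lb_M2 : (11.2708542:ℝ) ≤ Real.exp 2.4222204 := by
  have h := Real.sum_le_exp_of_nonneg (show (0:ℝ) ≤ 2.4222204 by norm_num) 15
  refine le_trans ?_ h
  norm_num [Finset.sum_range_succ, Nat.factorial]

private lemma exp_lb_M3 : (11.6082359:ℝ) ≤ Real.exp 2.4517151 := by
  have h := Real.sum_le_exp_of_nonneg (show (0:ℝ) ≤ 2.4517151 by norm_num) 15
  refine le_trans ?_ h
  norm_num [Finset.sum_range_succ, Nat.factorial]

private lemma exp_lb_M4 : (18.420681:ℝ) ≤ Real.exp 2.9134743 := by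
  have h := Real.sum_le_exp_of_nonneg (show (0:ℝ) ≤ 2.9134743 by norm_num) 16
  refine le_trans ?_ h
  norm_num [Finset.sum_range_succ, Nat.factorial]

private lemma exp_lb_M5 : (21.3115049:ℝ) ≤ Real.exp 3.0592473 := by
  have h := Real.sum_le_exp_of_nonneg (show (0:ℝ) ≤ 3.0592473 by norm_num) 16
  refine le_trans ?_ h
  norm_num [Finset.sum_range_succ, Nat.factorial]

private lemma glue {x tp M : ℝ} (hx : 77416 < x)
    (hM : Real.log (Real.log x) ≤ M)
    (htp : tp^2 ≤ x) (htp0 : 0 ≤ tp)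
    (h14 : 14 * (1.7810775*M + 5.1440510) ≤ tp)
    (hnum : (33 + 7*tp/3) * (12*(1.7810775*M + 5.1440510)) < tp^2) :
    1 + (x / 12) *
        (1 / (Real.exp Real.eulerMascheroniConstant * Real.log (Real.log x)
              + 3 / Real.log (Real.log 6)))
      - 7 * Real.sqrt x / 3 > 34 := by
  have hL0 : 0 < Real.log (Real.log x) := loglog_pos hx
  have hA := expA
  have hb := b_ub
  have hll6 := llsix
  have hb0 : 0 < 3 / Real.log (Real.log 6) := div_pos (by norm_num) (by linarith)
  have hDle : Real.exp Real.eulerMascheroniConstant * Real.log (Real.log x)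
      + 3 / Real.log (Real.log 6) ≤ 1.7810775*M + 5.1440510 :=
    add_le_add (mul_le_mul hA hM hL0.le (by norm_num)) hb
  have hD0 : 0 < Real.exp Real.eulerMascheroniConstant * Real.log (Real.log x)
      + 3 / Real.log (Real.log 6) :=
    add_pos (mul_pos (Real.exp_pos _) hL0) hb0
  have hDq0 : (0:ℝ) < 1.7810775*M + 5.1440510 := lt_of_lt_of_le hD0 hDle
  have hinv : 1/(1.7810775*M + 5.1440510)
      ≤ 1/(Real.exp Real.eulerMascheroniConstant * Real.log (Real.log x)
          + 3 / Real.log (Real.log 6)) :=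
    one_div_le_one_div_of_le hD0 hDle
  have ht0 : 0 ≤ Real.sqrt x := Real.sqrt_nonneg x
  have ht2 : Real.sqrt x^2 = x := Real.sq_sqrt (by linarith)
  have htp' : tp ≤ Real.sqrt x := Real.le_sqrt_of_sq_le htp
  have hq : (33 + 7*Real.sqrt x/3) * (12*(1.7810775*M + 5.1440510)) < Real.sqrt x^2 := by
    nlinarith [hnum, sq_nonneg (Real.sqrt x - tp),
      mul_nonneg (by linarith : (0:ℝ) ≤ Real.sqrt x - tp)
        (by linarith : (0:ℝ) ≤ tp - 14*(1.7810775*M + 5.1440510))]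
  rw [ht2] at hq
  have h12 : (0:ℝ) < 12*(1.7810775*M + 5.1440510) := by linarith
  have hq2 : 33 + 7*Real.sqrt x/3 < x / (12*(1.7810775*M + 5.1440510)) :=
    (lt_div_iff₀ h12).mpr hq
  have heq : x/12 * (1/(1.7810775*M + 5.1440510)) = x / (12*(1.7810775*M + 5.1440510)) := by
    rw [div_mul_div_comm, mul_one]
  rw [← heq] at hq2
  have hq3 : x/12 * (1/(1.7810775*M + 5.1440510))
      ≤ x/12 * (1/(Real.exp Real.eulerMascheroniConstant * Real.log (Real.log x)
          + 3 / Real.log (Real.log 6))) :=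
    mul_le_mul_of_nonneg_left hinv (by linarith : (0:ℝ) ≤ x/12)
  linarith

private lemma tail_case {x : ℝ} (hx2 : 1800814096 ≤ x) :
    1 + (x / 12) *
        (1 / (Real.exp Real.eulerMascheroniConstant * Real.log (Real.log x)
              + 3 / Real.log (Real.log 6)))
      - 7 * Real.sqrt x / 3 > 34 := by
  have hx : (77416:ℝ) < x := by linarith
  have hL0 : 0 < Real.log (Real.log x) := loglog_pos hx
  have hA := expA
  have hb := b_ub
  have hll6 := llsix
  have hb0 : 0 < 3 / Real.log (Real.log 6) := div_pos (by norm_num) (by linarith)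
  have ht0 : 0 ≤ Real.sqrt x := Real.sqrt_nonneg x
  have ht2 : Real.sqrt x^2 = x := Real.sq_sqrt (by linarith)
  have hs0 : 0 ≤ Real.sqrt (Real.sqrt x) := Real.sqrt_nonneg _
  have hs2 : Real.sqrt (Real.sqrt x)^2 = Real.sqrt x := Real.sq_sqrt ht0
  have h42 : (42436:ℝ) ≤ Real.sqrt x := Real.le_sqrt_of_sq_le (by nlinarith)
  have hs206 : (206:ℝ) ≤ Real.sqrt (Real.sqrt x) := Real.le_sqrt_of_sq_le (by nlinarith)
  set s := Real.sqrt (Real.sqrt x) with hs_def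
  have hx4 : x = s^4 := by rw [← ht2, ← hs2]; ring
  have hlogx : Real.log x = 4 * Real.log s := by
    rw [hx4, Real.log_pow]
    norm_num
  have hlx1 : (1:ℝ) < Real.log x := by
    rw [Real.lt_log_iff_exp_lt (by linarith : (0:ℝ) < x)]
    exact Real.exp_one_lt_d9.trans (by linarith)
  have hls : Real.log s ≤ s - 1 := Real.log_le_sub_one_of_pos (by linarith)
  have hll : Real.log (Real.log x) ≤ Real.log x - 1 :=
    Real.log_le_sub_one_of_pos (by linarith)
  have hM : Real.log (Real.log x) ≤ 4*s - 5 := by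
    have := hlogx
    linarith [hll, hls]
  have hDle : Real.exp Real.eulerMascheroniConstant * Real.log (Real.log x)
      + 3 / Real.log (Real.log 6) ≤ 57/8 * s := by
    have h1 : Real.exp Real.eulerMascheroniConstant * Real.log (Real.log x)
        ≤ 1.7810775 * (4*s - 5) := mul_le_mul hA hM hL0.le (by norm_num)
    linarith
  have hD0 : 0 < Real.exp Real.eulerMascheroniConstant * Real.log (Real.log x)
      + 3 / Real.log (Real.log 6) :=
    add_pos (mul_pos (Real.exp_pos _) hL0) hb0
  have hs0' : (0:ℝ) < s := by linarith
  have hinv : 1/((57/8*s))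
      ≤ 1/(Real.exp Real.eulerMascheroniConstant * Real.log (Real.log x)
          + 3 / Real.log (Real.log 6)) :=
    one_div_le_one_div_of_le hD0 hDle
  have hkey : x/12 * (1/((57/8*s))) = s^3*(2/171) := by
    rw [hx4]
    field_simp
    ring
  have hq3 : x/12 * (1/((57/8*s)))
      ≤ x/12 * (1/(Real.exp Real.eulerMascheroniConstant * Real.log (Real.log x)
          + 3 / Real.log (Real.log 6))) :=
    mul_le_mul_of_nonneg_left hinv (by linarith : (0:ℝ) ≤ x/12)
  have hfin : 34 < 1 + s^3*(2/171) - 7*s^2/3 := by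
    nlinarith [mul_le_mul_of_nonneg_right hs206 (sq_nonneg s), sq_nonneg (s-206), hs206]
  have hsx : Real.sqrt x = s^2 := hs2.symm
  linarith [hq3, hkey, hfin, hsx]

end GenusBoundAux

theorem genus_bound_gt_34 (x : ℝ) (hx : x > 77416) :
    1 + (x / 12) *
        (1 / (Real.exp Real.eulerMascheroniConstant * Real.log (Real.log x)
              + 3 / Real.log (Real.log 6)))
      - 7 * Real.sqrt x / 3 > 34 := by
  rcases le_or_gt x 77500 with h|h
  · exact glue hx (loglog_bound (by linarith) (le_trans h exp_lb_E1) exp_lb_M1)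
      (by nlinarith : (278.237:ℝ)^2 ≤ x) (by norm_num) (by norm_num) (by norm_num)
  rcases le_or_gt x 78500 with h2|h2
  · exact glue hx (loglog_bound (by linarith) (le_trans h2 exp_lb_E2) exp_lb_M2)
      (by nlinarith : (278.388:ℝ)^2 ≤ x) (by norm_num) (by norm_num) (by norm_num)
  rcases le_or_gt x 110000 with h3|h3
  · exact glue hx (loglog_bound (by linarith) (le_trans h3 exp_lb_E3) exp_lb_M3)
      (by nlinarith : (280.178:ℝ)^2 ≤ x) (by norm_num) (by norm_num) (by norm_num)
  rcases le_or_gt x 100000000 with h4|h4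
  · exact glue hx (loglog_bound (by linarith) (le_trans h4 exp_lb_E4) exp_lb_M4)
      (by nlinarith : (331.662:ℝ)^2 ≤ x) (by norm_num) (by norm_num) (by norm_num)
  rcases le_or_gt x 1800814096 with h5|h5
  · exact glue hx (loglog_bound (by linarith) (le_trans h5 exp_lb_E5) exp_lb_M5)
      (by nlinarith : (10000:ℝ)^2 ≤ x) (by norm_num) (by norm_num) (by norm_num)
  · exact tail_case h5.le
end

section
/- Let D > 1 be a product of an even number of distinct primes and N a positive integer coprime to D. With φ the Euler totient function, ψ the Dedekind psi function, and e₃(D,N), e₄(D,N) defined via Kronecker symbols as in the Shimura curve genus formula, the rational number 1 + φ(D)·ψ(N)/12 − e₄(D,N)/4 − e₃(D,N)/3 is an integer. Equivalently, φ(D)·ψ(N) ≡ 3·e₄(D,N) + 4·e₃(D,N) (mod 12). -/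
/-- The Kronecker symbol `(-4/p)` for a prime `p`. -/
def kronMinusFour (p : ℕ) : ℤ :=
  if p = 2 then 0 else if p % 4 = 1 then 1 else -1

/-- The Kronecker symbol `(-3/p)` for a prime `p`. -/
def kronMinusThree (p : ℕ) : ℤ :=
  if p = 3 then 0 else if p % 3 = 1 then 1 else -1

/-- `e₄(D,N)` from the genus formula for Shimura curves. -/
def e4 (D N : ℕ) : ℤ :=
  (∏ p ∈ D.primeFactors, (1 - kronMinusFour p)) *
  (∏ ℓ ∈ N.primeFactors.filter (fun ℓ => N.factorization ℓ = 1),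
      (1 + kronMinusFour ℓ)) *
  (∏ ℓ ∈ N.primeFactors.filter (fun ℓ => 2 ≤ N.factorization ℓ),
      (if kronMinusFour ℓ = 1 then 2 else 0))

/-- `e₃(D,N)` from the genus formula for Shimura curves. -/
def e3 (D N : ℕ) : ℤ :=
  (∏ p ∈ D.primeFactors, (1 - kronMinusThree p)) *
  (∏ ℓ ∈ N.primeFactors.filter (fun ℓ => N.factorization ℓ = 1),
      (1 + kronMinusThree ℓ)) *
  (∏ ℓ ∈ N.primeFactors.filter (fun ℓ => 2 ≤ N.factorization ℓ),
      (if kronMinusThree ℓ = 1 then 2 else 0))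

/-- The Dedekind psi function `ψ(n) = n·∏_{p ∣ n} (1 + 1/p)`. -/
noncomputable def dedekindPsi (n : ℕ) : ℚ :=
  (n : ℚ) * ∏ p ∈ n.primeFactors, (1 + 1 / (p : ℚ))

/-! ### Auxiliary lemmas -/

/-- Integer version of the Dedekind psi function. -/
def psiInt (n : ℕ) : ℤ :=
  ∏ p ∈ n.primeFactors, ((p : ℤ) ^ (n.factorization p - 1) * ((p : ℤ) + 1))

lemma prime_mod_three (p : ℕ) (hp : p.Prime) : p = 3 ∨ p % 3 = 1 ∨ p % 3 = 2 := by
  by_cases h : p = 3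
  · exact Or.inl h
  · have : ¬ (3 ∣ p) := fun hd => h ((Nat.prime_dvd_prime_iff_eq Nat.prime_three hp).mp hd).symm
    right; omega

lemma prime_mod_four (p : ℕ) (hp : p.Prime) : p = 2 ∨ p % 4 = 1 ∨ p % 4 = 3 := by
  by_cases h : p = 2
  · exact Or.inl h
  · have : ¬ (2 ∣ p) := fun hd => h ((Nat.prime_dvd_prime_iff_eq Nat.prime_two hp).mp hd).symm
    right; omega

lemma cast_mod3 (p : ℕ) : (p : ZMod 3) = ((p % 3 : ℕ) : ZMod 3) := (ZMod.natCast_mod p 3).symm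
lemma cast_mod4 (p : ℕ) : (p : ZMod 4) = ((p % 4 : ℕ) : ZMod 4) := (ZMod.natCast_mod p 4).symm

lemma L3a (p : ℕ) (hp : p.Prime) :
    ((p : ZMod 3) - 1) = -(1 - ((kronMinusThree p : ZMod 3))) := by
  rcases prime_mod_three p hp with h | h | h
  · subst h; simp [kronMinusThree]; decide
  · have h3 : p ≠ 3 := by omega
    rw [cast_mod3, h]; simp [kronMinusThree, h3, h]
  · have h3 : p ≠ 3 := by omega
    rw [cast_mod3, h]; simp [kronMinusThree, h3, h]; decide

lemma L3b (p : ℕ) (hp : p.Prime) :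
    ((p : ZMod 3) + 1) = 1 + ((kronMinusThree p : ZMod 3)) := by
  rcases prime_mod_three p hp with h | h | h
  · subst h; simp only [kronMinusThree]; decide
  · have h3 : p ≠ 3 := by omega
    rw [cast_mod3, h]; simp [kronMinusThree, h3, h]; try decide
  · have h3 : p ≠ 3 := by omega
    rw [cast_mod3, h]; simp [kronMinusThree, h3, h]; try decide

lemma L3c (p a : ℕ) (hp : p.Prime) (ha : 2 ≤ a) :
    (p : ZMod 3) ^ (a - 1) * ((p : ZMod 3) + 1)
      = (if kronMinusThree p = 1 then (2 : ZMod 3) else 0) := by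
  rcases prime_mod_three p hp with h | h | h
  · subst h
    have : ((3:ℕ) : ZMod 3) = 0 := by decide
    rw [this, zero_pow (by omega)]
    norm_num [kronMinusThree]
  · have h3 : p ≠ 3 := by omega
    rw [cast_mod3, h]; simp [kronMinusThree, h3, h]; try decide
  · have h3 : p ≠ 3 := by omega
    rw [cast_mod3, h]; simp [kronMinusThree, h3, h]
    right; decide

lemma L4a (p : ℕ) (hp : p.Prime) :
    ((p : ZMod 4) - 1) = 1 - ((kronMinusFour p : ZMod 4)) := by
  rcases prime_mod_four p hp with h | h | h
  · subst h; simp only [kronMinusFour]; decide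
  · have h2 : p ≠ 2 := by omega
    rw [cast_mod4, h]; simp [kronMinusFour, h2, h]
  · have h2 : p ≠ 2 := by omega
    rw [cast_mod4, h]; simp [kronMinusFour, h2, h]; try decide

lemma L4b (p : ℕ) (hp : p.Prime) (hodd : p ≠ 2) :
    ((p : ZMod 4) + 1) = -(1 + ((kronMinusFour p : ZMod 4))) := by
  rcases prime_mod_four p hp with h | h | h
  · exact absurd h hodd
  · rw [cast_mod4, h]; simp [kronMinusFour, hodd, h]; decide
  · rw [cast_mod4, h]; simp [kronMinusFour, hodd, h]; try decide

lemma L4c (p a : ℕ) (hp : p.Prime) (hodd : p ≠ 2) (ha : 2 ≤ a) :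
    (p : ZMod 4) ^ (a - 1) * ((p : ZMod 4) + 1)
      = (if kronMinusFour p = 1 then (2 : ZMod 4) else 0) := by
  rcases prime_mod_four p hp with h | h | h
  · exact absurd h hodd
  · rw [cast_mod4, h]; simp [kronMinusFour, hodd, h]; try decide
  · rw [cast_mod4, h]; simp [kronMinusFour, hodd, h]
    constructor <;> decide

/-- For squarefree `D`, `φ(D) = ∏ (p-1)` over prime factors, in `ℤ`. -/
lemma totient_int (D : ℕ) (hD : 0 < D) (hsf : Squarefree D) :
    (D.totient : ℤ) = ∏ p ∈ D.primeFactors, ((p : ℤ) - 1) := by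
  have hDp : ∏ p ∈ D.primeFactors, p = D := Nat.prod_primeFactors_of_squarefree hsf
  have h := Nat.totient_mul_prod_primeFactors D
  rw [hDp] at h
  have hnat : D.totient = ∏ p ∈ D.primeFactors, (p - 1) :=
    Nat.eq_of_mul_eq_mul_left hD (by rw [mul_comm D D.totient]; exact h)
  rw [hnat, Nat.cast_prod]
  exact Finset.prod_congr rfl fun p hp =>
    Nat.cast_sub (Nat.prime_of_mem_primeFactors hp).one_le

/-- Splitting a product over prime factors of `N` according to the multiplicity. -/
lemma prod_split {M : Type*} [CommMonoid M] (N : ℕ) (f : ℕ → M) :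
    ∏ p ∈ N.primeFactors, f p =
      (∏ p ∈ N.primeFactors.filter (fun ℓ => N.factorization ℓ = 1), f p) *
      (∏ p ∈ N.primeFactors.filter (fun ℓ => 2 ≤ N.factorization ℓ), f p) := by
  rw [← Finset.prod_filter_mul_prod_filter_not N.primeFactors
      (fun ℓ => N.factorization ℓ = 1) f]
  congr 1
  apply Finset.prod_congr _ (fun _ _ => rfl)
  apply Finset.filter_congr
  intro x hx
  have : N.factorization x ≠ 0 := by
    rw [← Finsupp.mem_support_iff, Nat.support_factorization]; exact hx
  constructor <;> intro h <;> omega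

lemma dedekindPsi_eq (N : ℕ) (hN : 0 < N) : dedekindPsi N = (psiInt N : ℚ) := by
  have hNne : N ≠ 0 := hN.ne'
  have hNfac : (N : ℚ) = ∏ p ∈ N.primeFactors, (p : ℚ) ^ (N.factorization p) := by
    conv_lhs => rw [← Nat.factorization_prod_pow_eq_self hNne]
    rw [Finsupp.prod, Nat.support_factorization]
    push_cast
    rfl
  rw [dedekindPsi, psiInt, hNfac, ← Finset.prod_mul_distrib]
  push_cast
  apply Finset.prod_congr rfl
  intro p hp
  have hp' : p.Prime := Nat.prime_of_mem_primeFactors hp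
  have hpq : (p : ℚ) ≠ 0 := Nat.cast_ne_zero.mpr hp'.pos.ne'
  have ha : 1 ≤ N.factorization p := by
    have : N.factorization p ≠ 0 := by
      rw [← Finsupp.mem_support_iff, Nat.support_factorization]; exact hp
    omega
  have hpow : (p : ℚ) ^ (N.factorization p) = (p:ℚ) ^ (N.factorization p - 1) * p := by
    rw [← pow_succ]
    congr 1
    omega
  rw [hpow]
  field_simp

lemma mem_pf_factor_pos {N p : ℕ} (hp : p ∈ N.primeFactors) : 1 ≤ N.factorization p := by
  have : N.factorization p ≠ 0 := by
    rw [← Finsupp.mem_support_iff, Nat.support_factorization]; exact hp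
  omega

/-- The mod 3 congruence. -/
lemma key3 (D N : ℕ) (hD : 1 < D) (hsf : Squarefree D)
    (heven : Even D.primeFactors.card) (hN : 0 < N) :
    (((D.totient : ℤ) * psiInt N : ℤ) : ZMod 3) = ((e3 D N : ℤ) : ZMod 3) := by
  have hφ : (((D.totient : ℤ) : ZMod 3)) =
      ∏ p ∈ D.primeFactors, (((1 : ZMod 3) - (kronMinusThree p : ZMod 3))) := by
    rw [totient_int D (by omega) hsf]
    push_cast
    calc ∏ p ∈ D.primeFactors, ((p : ZMod 3) - 1)
        = ∏ p ∈ D.primeFactors, (-1 * (1 - (kronMinusThree p : ZMod 3))) := by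
          refine Finset.prod_congr rfl fun p hp => ?_
          rw [L3a p (Nat.prime_of_mem_primeFactors hp)]; ring
      _ = (-1) ^ D.primeFactors.card *
            ∏ p ∈ D.primeFactors, (1 - (kronMinusThree p : ZMod 3)) := by
          rw [Finset.prod_mul_distrib, Finset.prod_const]
      _ = _ := by rw [Even.neg_one_pow heven, one_mul]
  have hψ : ((psiInt N : ℤ) : ZMod 3) =
      (∏ p ∈ N.primeFactors.filter (fun ℓ => N.factorization ℓ = 1),
        ((1 : ZMod 3) + (kronMinusThree p : ZMod 3))) *
      (∏ p ∈ N.primeFactors.filter (fun ℓ => 2 ≤ N.factorization ℓ),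
        (if kronMinusThree p = 1 then (2 : ZMod 3) else 0)) := by
    rw [psiInt]
    push_cast
    rw [prod_split N (fun p => (p : ZMod 3) ^ (N.factorization p - 1) * ((p : ZMod 3) + 1))]
    congr 1
    · refine Finset.prod_congr rfl fun p hp => ?_
      obtain ⟨hp1, hp2⟩ := Finset.mem_filter.mp hp
      rw [hp2]
      simp only [Nat.sub_self, pow_zero, one_mul]
      exact L3b p (Nat.prime_of_mem_primeFactors hp1)
    · refine Finset.prod_congr rfl fun p hp => ?_
      obtain ⟨hp1, hp2⟩ := Finset.mem_filter.mp hp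
      exact L3c p _ (Nat.prime_of_mem_primeFactors hp1) hp2
  rw [Int.cast_mul, hφ, hψ, e3]
  push_cast
  ring

lemma two_dvd_sub_one {p : ℕ} (hp : p.Prime) (hne : p ≠ 2) : (2:ℤ) ∣ ((p:ℤ) - 1) := by
  rcases hp.eq_two_or_odd' with h | ⟨k, hk⟩
  · exact absurd h hne
  · exact ⟨k, by push_cast [hk]; ring⟩

lemma two_dvd_one_sub_kron4 {p : ℕ} (hne : p ≠ 2) : (2:ℤ) ∣ (1 - kronMinusFour p) := by
  by_cases h : p % 4 = 1 <;> simp [kronMinusFour, hne, h]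

lemma four_dvd_prod {s : Finset ℕ} (f : ℕ → ℤ) {p q : ℕ} (hp : p ∈ s) (hq : q ∈ s)
    (hne : p ≠ q) (h2p : (2:ℤ) ∣ f p) (h2q : (2:ℤ) ∣ f q) : (4:ℤ) ∣ ∏ x ∈ s, f x := by
  have hq' : q ∈ s.erase p := Finset.mem_erase.mpr ⟨hne.symm, hq⟩
  rw [← Finset.mul_prod_erase s f hp, ← Finset.mul_prod_erase _ f hq']
  obtain ⟨a, ha⟩ := h2p
  obtain ⟨b, hb⟩ := h2q
  exact ⟨a * (b * ∏ x ∈ (s.erase p).erase q, f x), by rw [ha, hb]; ring⟩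

lemma card_ge_two {D : ℕ} (hD : 1 < D) (heven : Even D.primeFactors.card) :
    1 < D.primeFactors.card := by
  have hne : D.primeFactors.Nonempty := Nat.nonempty_primeFactors.mpr hD
  have h0 : 0 < D.primeFactors.card := Finset.card_pos.mpr hne
  rcases heven with ⟨c, hc⟩
  omega

/-- The mod 4 congruence. -/
lemma key4 (D N : ℕ) (hD : 1 < D) (hsf : Squarefree D)
    (heven : Even D.primeFactors.card) (hcop : Nat.Coprime D N) (hN : 0 < N) :
    (((D.totient : ℤ) * psiInt N : ℤ) : ZMod 4) = 3 * ((e4 D N : ℤ) : ZMod 4) := by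
  by_cases h2 : 2 ∣ D
  · -- D even, so N odd
    have hNodd : ∀ ℓ ∈ N.primeFactors, ℓ ≠ 2 := by
      intro ℓ hl hl2
      subst hl2
      have h2N : 2 ∣ N := Nat.dvd_of_mem_primeFactors hl
      have : (2:ℕ) ∣ 1 := hcop ▸ Nat.dvd_gcd h2 h2N
      omega
    have hφ : (((D.totient : ℤ) : ZMod 4)) =
        ∏ p ∈ D.primeFactors, ((1 : ZMod 4) - (kronMinusFour p : ZMod 4)) := by
      rw [totient_int D (by omega) hsf]
      push_cast
      exact Finset.prod_congr rfl fun p hp => L4a p (Nat.prime_of_mem_primeFactors hp)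
    have hψ : ((psiInt N : ℤ) : ZMod 4) =
        (-1) ^ (N.primeFactors.filter (fun ℓ => N.factorization ℓ = 1)).card *
        ((∏ p ∈ N.primeFactors.filter (fun ℓ => N.factorization ℓ = 1),
          ((1 : ZMod 4) + (kronMinusFour p : ZMod 4))) *
        (∏ p ∈ N.primeFactors.filter (fun ℓ => 2 ≤ N.factorization ℓ),
          (if kronMinusFour p = 1 then (2 : ZMod 4) else 0))) := by
      rw [psiInt]
      push_cast
      rw [prod_split N (fun p => (p : ZMod 4) ^ (N.factorization p - 1) * ((p : ZMod 4) + 1))]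
      have hB : ∏ p ∈ N.primeFactors.filter (fun ℓ => N.factorization ℓ = 1),
            ((p : ZMod 4) ^ (N.factorization p - 1) * ((p : ZMod 4) + 1))
          = (-1) ^ (N.primeFactors.filter (fun ℓ => N.factorization ℓ = 1)).card *
            ∏ p ∈ N.primeFactors.filter (fun ℓ => N.factorization ℓ = 1),
              ((1 : ZMod 4) + (kronMinusFour p : ZMod 4)) := by
        rw [← Finset.prod_const, ← Finset.prod_mul_distrib]
        refine Finset.prod_congr rfl fun p hp => ?_
        obtain ⟨hp1, hp2⟩ := Finset.mem_filter.mp hp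
        rw [hp2]
        simp only [Nat.sub_self, pow_zero, one_mul]
        rw [L4b p (Nat.prime_of_mem_primeFactors hp1) (hNodd p hp1)]
        ring
      have hC : ∏ p ∈ N.primeFactors.filter (fun ℓ => 2 ≤ N.factorization ℓ),
            ((p : ZMod 4) ^ (N.factorization p - 1) * ((p : ZMod 4) + 1))
          = ∏ p ∈ N.primeFactors.filter (fun ℓ => 2 ≤ N.factorization ℓ),
              (if kronMinusFour p = 1 then (2 : ZMod 4) else 0) := by
        refine Finset.prod_congr rfl fun p hp => ?_
        obtain ⟨hp1, hp2⟩ := Finset.mem_filter.mp hp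
        exact L4c p _ (Nat.prime_of_mem_primeFactors hp1) (hNodd p hp1) hp2
      rw [hB, hC]
      ring
    have he : ((e4 D N : ℤ) : ZMod 4) =
        (∏ p ∈ D.primeFactors, ((1 : ZMod 4) - (kronMinusFour p : ZMod 4))) *
        ((∏ p ∈ N.primeFactors.filter (fun ℓ => N.factorization ℓ = 1),
          ((1 : ZMod 4) + (kronMinusFour p : ZMod 4))) *
        (∏ p ∈ N.primeFactors.filter (fun ℓ => 2 ≤ N.factorization ℓ),
          (if kronMinusFour p = 1 then (2 : ZMod 4) else 0))) := by
      rw [e4]; push_cast; ring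
    -- e4 is even
    have h2mem : 2 ∈ D.primeFactors :=
      Nat.mem_primeFactors.mpr ⟨Nat.prime_two, h2, by omega⟩
    obtain ⟨q, hq, hqne⟩ := Finset.exists_mem_ne (card_ge_two hD heven) 2
    have h2A : (2:ℤ) ∣ ∏ p ∈ D.primeFactors, (1 - kronMinusFour p) :=
      (two_dvd_one_sub_kron4 hqne).trans (Finset.dvd_prod_of_mem _ hq)
    have h2e : (2:ℤ) ∣ e4 D N := by
      rw [e4]
      exact (h2A.mul_right _).mul_right _
    have h0 : ((e4 D N : ℤ) : ZMod 4) + ((e4 D N : ℤ) : ZMod 4) = 0 := by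
      have : ((2 * e4 D N : ℤ) : ZMod 4) = 0 := by
        obtain ⟨m, hm⟩ := h2e
        exact (ZMod.intCast_zmod_eq_zero_iff_dvd _ 4).mpr ⟨m, by omega⟩
      push_cast at this
      linear_combination this
    rw [Int.cast_mul, hφ, hψ]
    rcases neg_one_pow_eq_or (ZMod 4)
        (N.primeFactors.filter (fun ℓ => N.factorization ℓ = 1)).card with h | h
    · rw [h]; linear_combination -he - h0
    · rw [h]; linear_combination he - 2 * h0
  · -- D odd : both sides divisible by 4
    obtain ⟨p, hp, q, hq, hpq⟩ := Finset.one_lt_card.mp (card_ge_two hD heven)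
    have hodd : ∀ r ∈ D.primeFactors, r ≠ 2 := by
      intro r hr hr2
      exact h2 (hr2 ▸ Nat.dvd_of_mem_primeFactors hr)
    have h4φ : (4:ℤ) ∣ (D.totient : ℤ) := by
      rw [totient_int D (by omega) hsf]
      exact four_dvd_prod _ hp hq hpq
        (two_dvd_sub_one (Nat.prime_of_mem_primeFactors hp) (hodd p hp))
        (two_dvd_sub_one (Nat.prime_of_mem_primeFactors hq) (hodd q hq))
    have h4e : (4:ℤ) ∣ e4 D N := by
      rw [e4]
      exact ((four_dvd_prod _ hp hq hpq (two_dvd_one_sub_kron4 (hodd p hp))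
        (two_dvd_one_sub_kron4 (hodd q hq))).mul_right _).mul_right _
    have hz1 : (((D.totient : ℤ) * psiInt N : ℤ) : ZMod 4) = 0 :=
      (ZMod.intCast_zmod_eq_zero_iff_dvd _ 4).mpr (h4φ.mul_right _)
    have hz2 : ((e4 D N : ℤ) : ZMod 4) = 0 :=
      (ZMod.intCast_zmod_eq_zero_iff_dvd _ 4).mpr h4e
    rw [hz1, hz2, mul_zero]

/-- The genus formula for the Shimura curve `X₀ᴰ(N)` yields an integer:
`1 + φ(D)ψ(N)/12 − e₄(D,N)/4 − e₃(D,N)/3 ∈ ℤ`; equivalently,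
`φ(D)·ψ(N) ≡ 3·e₄(D,N) + 4·e₃(D,N) (mod 12)`. -/
theorem shimura_genus_formula_integral
    (D N : ℕ) (hD : 1 < D) (hsf : Squarefree D)
    (heven : Even D.primeFactors.card) (hcop : Nat.Coprime D N) (hN : 0 < N) :
    (∃ g : ℤ, (1 : ℚ) + (Nat.totient D : ℚ) * dedekindPsi N / 12
        - (e4 D N : ℚ) / 4 - (e3 D N : ℚ) / 3 = (g : ℚ)) ∧
    (∃ k : ℤ, (Nat.totient D : ℚ) * dedekindPsi N
        - ((3 * e4 D N + 4 * e3 D N : ℤ) : ℚ) = 12 * (k : ℚ)) := by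
  set X : ℤ := (D.totient : ℤ) * psiInt N - (3 * e4 D N + 4 * e3 D N) with hX
  have h4 : (4:ℤ) ∣ X := by
    have hz : ((X : ZMod 4) = 0) := by
      have hk := key4 D N hD hsf heven hcop hN
      push_cast [hX] at hk ⊢
      rw [hk]
      have h40 : ((4:ℤ) : ZMod 4) = 0 := by decide
      push_cast at h40
      linear_combination (-(e3 D N : ℤ) : ZMod 4) * h40
    exact_mod_cast (ZMod.intCast_zmod_eq_zero_iff_dvd X 4).mp hz
  have h3 : (3:ℤ) ∣ X := by
    have hz : ((X : ZMod 3) = 0) := by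
      have hk := key3 D N hD hsf heven hN
      push_cast [hX] at hk ⊢
      rw [hk]
      have h30 : ((3:ℤ) : ZMod 3) = 0 := by decide
      push_cast at h30
      linear_combination (-(e4 D N : ℤ) - (e3 D N : ℤ) : ZMod 3) * h30
    exact_mod_cast (ZMod.intCast_zmod_eq_zero_iff_dvd X 3).mp hz
  have h12 : (12:ℤ) ∣ X := by
    obtain ⟨a, ha⟩ := h4
    obtain ⟨b, hb⟩ := h3
    omega
  obtain ⟨k, hk⟩ := h12
  have hkQ : (D.totient : ℚ) * (psiInt N : ℚ)
      - (3 * (e4 D N : ℚ) + 4 * (e3 D N : ℚ)) = 12 * (k : ℚ) := by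
    have := congrArg (fun z : ℤ => (z : ℚ)) hk
    push_cast [hX] at this
    linarith [this]
  constructor
  · exact ⟨k + 1, by rw [dedekindPsi_eq N hN]; push_cast; linarith [hkQ]⟩
  · exact ⟨k, by rw [dedekindPsi_eq N hN]; push_cast; linarith [hkQ]⟩
end

section
/- Let X be a smooth projective geometrically integral curve over ℚ with X(ℝ) = ∅. If X admits a nonconstant morphism f : X → ℙ¹ of odd degree d defined over ℚ, then a contradiction follows; in particular, every nonconstant morphism X → ℙ¹ over ℚ has even degree, so the ℚ-gonality of X is even. -/
open Module Polynomial

set_option maxHeartbeats 1000000 in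
set_option synthInstance.maxHeartbeats 400000 in
/-- A smooth projective geometrically integral curve `X` over `ℚ` with a
nonconstant morphism `X → ℙ¹` of degree `d` over `ℚ` corresponds to a finite
extension `L` of the rational function field `ℚ(t) = RatFunc ℚ` of degree `d`.
The closed points of `X` correspond to the places of `L/ℚ`, i.e. the nontrivial
valuation subrings of `L` containing `ℚ`, whose residue fields are number fields.
The hypothesis `X(ℝ) = ∅` says that no such residue field embeds into `ℝ`.
If the degree `d` is odd, a contradiction follows; in particular every
nonconstant morphism `X → ℙ¹` over `ℚ` has even degree, so the `ℚ`-gonality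
of `X` is even. -/
theorem no_odd_degree_map_of_no_real_points
    (L : Type*) [Field L] [Algebra ℚ L] [Algebra (RatFunc ℚ) L]
    [IsScalarTower ℚ (RatFunc ℚ) L] [FiniteDimensional (RatFunc ℚ) L]
    (hodd : Odd (Module.finrank (RatFunc ℚ) L))
    (hnoreal : ∀ v : ValuationSubring L, v ≠ ⊤ →
      (∀ x : ℚ, algebraMap ℚ L x ∈ v) →
      IsEmpty (IsLocalRing.ResidueField v →+* ℝ)) :
    False := by
  classical
  set K := RatFunc ℚ with hK
  set A := Polynomial ℚ with hA
  -- `L` as an `A = ℚ[X]`-algebra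
  letI : Algebra A L := ((algebraMap K L).comp (algebraMap A K)).toAlgebra
  haveI : IsScalarTower A K L := IsScalarTower.of_algebraMap_eq fun x => rfl
  haveI : IsScalarTower ℚ A L := IsScalarTower.of_algebraMap_eq' (by
    rw [IsScalarTower.algebraMap_eq ℚ K L, IsScalarTower.algebraMap_eq ℚ A K,
      ← RingHom.comp_assoc]
    rfl)
  haveI : CharZero K := charZero_of_injective_algebraMap (algebraMap ℚ K).injective
  haveI : Algebra.IsSeparable K L := Algebra.IsSeparable.of_integral K L
  set B := integralClosure A L with hB
  haveI : IsFractionRing B L :=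
    IsIntegralClosure.isFractionRing_of_finite_extension A K L B
  haveI : IsDedekindDomain B := integralClosure.isDedekindDomain A K L
  haveI : Module.Finite A B := IsIntegralClosure.finite A K L B
  -- the prime `p = (X)` of `ℚ[X]`
  set p : Ideal A := Ideal.span {X - C (0 : ℚ)} with hp
  haveI hpmax : p.IsMaximal :=
    PrincipalIdealRing.isMaximal_of_irreducible (Polynomial.irreducible_X_sub_C 0)
  have hp0 : p ≠ ⊥ := by
    intro h
    rw [hp, Ideal.span_singleton_eq_bot] at h
    exact Polynomial.X_sub_C_ne_zero 0 h
  -- the fundamental identity ∑ e f = d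
  have hsum := Ideal.sum_ramification_inertia (R := A) (S := B) (p := p) K L hp0
  -- find a prime with odd residue degree
  have hexists : ∃ P ∈ (UniqueFactorizationMonoid.factors
      (Ideal.map (algebraMap A B) p)).toFinset,
      Odd (Ideal.ramificationIdx' p P *
        Ideal.inertiaDeg' p P) := by
    by_contra h
    push_neg at h
    simp only [Nat.not_odd_iff_even] at h
    have := Finset.even_sum _ h
    rw [hsum] at this
    exact (Nat.not_odd_iff_even.mpr this) hodd
  obtain ⟨P, hPfac, hPodd⟩ := hexists
  have hPodd : Odd (Ideal.inertiaDeg' p P) :=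
    ((Nat.odd_mul.mp hPodd)).2
  have hPprime : Prime P := UniqueFactorizationMonoid.prime_of_factor P
    (Multiset.mem_toFinset.mp hPfac)
  haveI hPisprime : P.IsPrime := Ideal.isPrime_of_prime hPprime
  have hP0 : P ≠ ⊥ := hPprime.ne_zero
  haveI hPmax : P.IsMaximal := Ideal.IsPrime.isMaximal hPisprime hP0
  have hle : Ideal.map (algebraMap A B) p ≤ P :=
    Ideal.le_of_dvd (UniqueFactorizationMonoid.dvd_of_mem_factors
      (Multiset.mem_toFinset.mp hPfac))
  -- the residue field F = B/P is a number field of odd degree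
  letI F := B ⧸ P
  letI : Field F := Ideal.Quotient.field P

  have hPp : Ideal.comap (algebraMap A B) P = p := by
    by_contra h
    rw [Ideal.inertiaDeg', dif_neg h] at hPodd
    simp [Nat.odd_iff] at hPodd
  letI algApF : Algebra (A ⧸ p) F :=
    Ideal.Quotient.algebraQuotientOfLEComap (le_of_eq hPp.symm)
  haveI : CharZero F := by
    let e0 : (A ⧸ p) ≃ₐ[ℚ] ℚ := Polynomial.quotientSpanXSubCAlgEquiv (0 : ℚ)
    let χ : ℚ →+* F := (algebraMap (A ⧸ p) F).comp (e0.symm : ℚ ≃ₐ[ℚ] (A ⧸ p)).toRingEquiv.toRingHom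
    letI : Algebra ℚ F := χ.toAlgebra
    exact charZero_of_injective_algebraMap (algebraMap ℚ F).injective
  letI instQF : Algebra ℚ F := DivisionRing.toRatAlgebra
  letI instMQF : Module ℚ F := Algebra.toModule
  rw [Ideal.inertiaDeg', dif_pos hPp] at hPodd
  -- transfer the degree to ℚ
  let e : (A ⧸ p) ≃ₐ[ℚ] ℚ := Polynomial.quotientSpanXSubCAlgEquiv (0 : ℚ)
  have key : ∀ x : A ⧸ p, algebraMap ℚ F (e x) = algebraMap (A ⧸ p) F x := by
    have hg12 : ((algebraMap ℚ F).comp (evalRingHom (0 : ℚ))) =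
        (Ideal.Quotient.mk P).comp (algebraMap A B) := by
      apply Polynomial.ringHom_ext
      · intro a
        exact congrFun (congrArg DFunLike.coe (RingHom.ext_rat
          (((algebraMap ℚ F).comp (evalRingHom (0 : ℚ))).comp (C : ℚ →+* A))
          (((Ideal.Quotient.mk P).comp (algebraMap A B)).comp (C : ℚ →+* A)))) a
      · have hXP : algebraMap A B X ∈ P := by
          apply hle
          apply Ideal.mem_map_of_mem
          rw [hp]
          exact Ideal.subset_span (by simp)
        simp only [RingHom.comp_apply, coe_evalRingHom, eval_X, map_zero]
        exact (Ideal.Quotient.eq_zero_iff_mem.mpr hXP).symm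
    intro x
    obtain ⟨a, rfl⟩ := Ideal.Quotient.mk_surjective x
    have h1 : e (Ideal.Quotient.mk p a) = a.eval 0 :=
      Polynomial.quotientSpanXSubCAlgEquiv_mk 0 a
    have h2 : algebraMap (A ⧸ p) F (Ideal.Quotient.mk p a)
        = Ideal.Quotient.mk P (algebraMap A B a) :=
      Ideal.quotientMap_mk (H := le_of_eq hPp.symm)
    rw [h1, h2]
    exact congrFun (congrArg DFunLike.coe hg12) a
  have hrank : Module.rank (A ⧸ p) F = Module.rank ℚ F := by
    refine Algebra.rank_eq_of_equiv_equiv e.toRingEquiv (RingEquiv.refl F) ?_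
    refine RingHom.ext fun x => ?_
    simpa using key x
  have hoddF : Odd (finrank ℚ F) := by
    unfold Module.finrank at hPodd ⊢
    rw [hrank] at hPodd
    exact hPodd
  haveI : FiniteDimensional ℚ F := FiniteDimensional.of_finrank_pos hoddF.pos
  haveI : NumberField F := ⟨⟩
  -- a real embedding of F
  have hreal : NumberField.InfinitePlace.nrRealPlaces F ≠ 0 := by
    intro h
    have hcard := NumberField.InfinitePlace.card_add_two_mul_card_eq_rank F
    rw [h, zero_add] at hcard
    obtain ⟨k, hk⟩ := hoddF
    omega
  have hpos : 0 < Fintype.card {w : NumberField.InfinitePlace F // w.IsReal} :=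
    Nat.pos_of_ne_zero hreal
  obtain ⟨⟨w, hw⟩⟩ := Fintype.card_pos_iff.mp hpos
  let σ : F →+* ℝ := NumberField.InfinitePlace.embedding_of_isReal hw
  -- the valuation subring: localization of B at P, inside L
  let O : Subalgebra B L :=
    Localization.subalgebra.ofField L P.primeCompl P.primeCompl_le_nonZeroDivisors
  haveI : IsLocalization.AtPrime O P :=
    Localization.subalgebra.isLocalization_ofField L P.primeCompl
      P.primeCompl_le_nonZeroDivisors
  haveI : IsDiscreteValuationRing O :=
    IsLocalization.AtPrime.isDiscreteValuationRing_of_dedekind_domain B hP0 O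
  haveI : IsLocalRing O := IsLocalization.AtPrime.isLocalRing O P
  have hmem : ∀ x : L, x ∈ O.toSubring ∨ x⁻¹ ∈ O.toSubring := by
    intro x
    rcases (ValuationRing.iff_isInteger_or_isInteger O L).mp inferInstance x with h | h
    · obtain ⟨a, ha⟩ := h
      exact Or.inl (ha ▸ a.2)
    · obtain ⟨a, ha⟩ := h
      exact Or.inr (ha ▸ a.2)
  let v : ValuationSubring L := { O.toSubring with mem_or_inv_mem' := hmem }
  -- v ≠ ⊤
  have hvmem : ∀ x : L, x ∈ v ↔ x ∈ O := fun x => Iff.rfl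
  have hne : v ≠ ⊤ := by
    obtain ⟨π, hπP, hπ0⟩ := Submodule.exists_mem_ne_zero_of_ne_bot hP0
    intro htop
    have hmem2 : (algebraMap B L π)⁻¹ ∈ v := by rw [htop]; trivial
    rw [hvmem] at hmem2
    have hx0 : algebraMap B L π ≠ 0 := by
      simpa using (map_ne_zero_iff (algebraMap B L)
        (IsFractionRing.injective B L)).mpr hπ0
    have hunit : IsUnit (algebraMap B O π) := by
      refine IsUnit.of_mul_eq_one ⟨_, hmem2⟩ ?_
      apply Subtype.ext
      push_cast
      show (algebraMap B L π) * (algebraMap B L π)⁻¹ = 1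
      exact mul_inv_cancel₀ hx0
    exact (IsLocalization.AtPrime.isUnit_to_map_iff O P π).mp hunit hπP
  -- v contains ℚ
  have hQQ : ∀ x : ℚ, algebraMap ℚ L x ∈ v := by
    intro x
    rw [hvmem]
    have h1 : algebraMap ℚ L x = algebraMap A L (C x) := by
      rw [IsScalarTower.algebraMap_apply ℚ A L, Polynomial.algebraMap_eq]
    rw [h1]
    exact O.algebraMap_mem ⟨algebraMap A L (C x), Subalgebra.algebraMap_mem B (C x)⟩
  -- map from the residue field of v to ℝ
  have hg : ∀ s : P.primeCompl, IsUnit (Ideal.Quotient.mk P (s : B)) := by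
    intro s
    refine isUnit_iff_ne_zero.mpr ?_
    rw [Ne, Ideal.Quotient.eq_zero_iff_mem]
    exact s.2
  let ψ : O →+* F := IsLocalization.lift (M := P.primeCompl) (S := O) hg
  let f : O →+* ℝ := σ.comp ψ
  haveI : IsLocalHom f := by
    constructor
    intro a ha
    obtain ⟨⟨b, s⟩, rfl⟩ := IsLocalization.mk'_surjective P.primeCompl a
    dsimp only at ha ⊢
    rw [IsLocalization.AtPrime.isUnit_mk'_iff O P b s]
    intro hbP
    have hψ : (Ideal.Quotient.mk P) b
        = (Ideal.Quotient.mk P) (s : B) * ψ (IsLocalization.mk' O b s) :=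
      (IsLocalization.lift_mk'_spec _ _ _ _).mp rfl
    have hb0 : (Ideal.Quotient.mk P) b = 0 := Ideal.Quotient.eq_zero_iff_mem.mpr hbP
    have hψ0 : ψ (IsLocalization.mk' O b s) = 0 := by
      rw [hb0] at hψ
      exact ((hg s).mul_right_eq_zero).mp hψ.symm
    have hf0 : f (IsLocalization.mk' O b s) = 0 := by
      show σ (ψ _) = 0
      rw [hψ0, map_zero]
    rw [hf0] at ha
    exact (ha.ne_zero rfl).elim
  let ρ : IsLocalRing.ResidueField O →+* ℝ := IsLocalRing.ResidueField.lift f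
  exact (hnoreal v hne hQQ).elim' ρ
end
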